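/- arXiv:2502.01140 — 2 statements merged into one kernel-verified Lean document; each statement's English description precedes it below -/
import Mathlib

section
/- For each 0 ≤ k ≤ n−1 and x in the open interval ((i−1)/(2b^n), i/(2b^n)) with 1 ≤ i ≤ 2b^n, one has 0 < φ(b^k x) < 1/2, where φ(x) = dist(x,ℤ). -/
open Set Filter

/-- Distance from `x` to the nearest integer. -/
noncomputable def phi (x : ℝ) : ℝ := |x - (round x : ℝ)|

/-- Least number of sets of diameter at most `r` needed to cover `E`. -/
noncomputable def coverNum {X : Type*} [PseudoMetricSpace X] (r : ℝ) (E : Set X) : ℕ :=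
  sInf {n | ∃ 𝒰 : Finset (Set X), 𝒰.card = n ∧ (∀ U ∈ 𝒰, Metric.diam U ≤ r) ∧ E ⊆ ⋃₀ ↑𝒰}

/-- Assouad dimension of a set, via covering numbers of balls at two scales. -/
noncomputable def assouadDim {X : Type*} [PseudoMetricSpace X] (F : Set X) : ℝ :=
  sInf {α : ℝ | 0 < α ∧ ∃ C : ℝ, 0 < C ∧ ∀ R r : ℝ, 0 < r → r < R → ∀ x ∈ F,
    (coverNum r (Metric.closedBall x R ∩ F) : ℝ) ≤ C * (R / r) ^ α}

/-- A square of a `δ`-mesh with offset `v`, indexed by `m ∈ ℤ × ℤ`. -/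
noncomputable def gridSquare (v : ℝ × ℝ) (δ : ℝ) (m : ℤ × ℤ) : Set (ℝ × ℝ) :=
  Icc (v.1 + m.1 * δ) (v.1 + (m.1 + 1) * δ) ×ˢ Icc (v.2 + m.2 * δ) (v.2 + (m.2 + 1) * δ)

/-- Least number of squares of a `δ`-mesh needed to cover `E`, over all possible `δ`-meshes. -/
noncomputable def gridCoverNum (δ : ℝ) (E : Set (ℝ × ℝ)) : ℕ :=
  sInf {n | ∃ (v : ℝ × ℝ) (t : Finset (ℤ × ℤ)), t.card = n ∧ E ⊆ ⋃ m ∈ t, gridSquare v δ m}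

/-- Oscillation of `g` on `E`. -/
noncomputable def osc (g : ℝ → ℝ) (E : Set ℝ) : ℝ :=
  sSup ((fun p : ℝ × ℝ => |g p.1 - g p.2|) '' (E ×ˢ E))

/-- Lower box dimension via covering numbers. -/
noncomputable def lowerBoxDim {X : Type*} [PseudoMetricSpace X] (F : Set X) : ℝ :=
  Filter.liminf (fun δ : ℝ => Real.log (coverNum δ F) / (-Real.log δ)) (nhdsWithin 0 (Set.Ioi 0))

/-- Upper box dimension via covering numbers. -/
noncomputable def upperBoxDim {X : Type*} [PseudoMetricSpace X] (F : Set X) : ℝ :=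
  Filter.limsup (fun δ : ℝ => Real.log (coverNum δ F) / (-Real.log δ)) (nhdsWithin 0 (Set.Ioi 0))

theorem phi_pos_lt_half (b : ℕ) (hb : 2 ≤ b) (n k i : ℕ) (hk : k < n)
    (hi1 : 1 ≤ i) (hi2 : i ≤ 2 * b ^ n) (x : ℝ)
    (hx : x ∈ Ioo (((i : ℝ) - 1) / (2 * (b : ℝ) ^ n)) ((i : ℝ) / (2 * (b : ℝ) ^ n))) :
    0 < phi ((b : ℝ) ^ k * x) ∧ phi ((b : ℝ) ^ k * x) < 1 / 2 := by
  have hb0 : (0:ℝ) < (b:ℝ) := by positivity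
  have hD : (0:ℝ) < 2 * (b:ℝ) ^ n := by positivity
  set y : ℝ := (b:ℝ) ^ k * x with hy
  -- key: 2y is not an integer
  have key : ∀ t : ℤ, 2 * y ≠ (t : ℝ) := by
    intro t ht
    have h1 : ((i:ℝ) - 1) < 2 * (b:ℝ) ^ n * x := by
      have := hx.1
      rw [div_lt_iff₀ hD] at this
      linarith
    have h2 : 2 * (b:ℝ) ^ n * x < (i:ℝ) := by
      have := hx.2
      rw [lt_div_iff₀ hD] at this
      linarith
    have hsplit : (b:ℝ) ^ n = (b:ℝ) ^ (n - k) * (b:ℝ) ^ k := by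
      rw [← pow_add]
      congr 1
      omega
    have heq : 2 * (b:ℝ) ^ n * x = ((b ^ (n - k) : ℕ) : ℤ) * t := by
      push_cast
      rw [hsplit]
      calc 2 * ((b:ℝ) ^ (n-k) * (b:ℝ) ^ k) * x
          = (b:ℝ) ^ (n-k) * (2 * y) := by ring
        _ = (b:ℝ) ^ (n-k) * t := by rw [ht]
    set N : ℤ := ((b ^ (n - k) : ℕ) : ℤ) * t with hN
    rw [heq] at h1 h2
    have hlt1 : (i:ℤ) - 1 < N := by exact_mod_cast h1
    have hlt2 : N < (i:ℤ) := by exact_mod_cast h2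
    omega
  have hne0 : y ≠ (round y : ℝ) := by
    intro h
    exact key (2 * round y) (by push_cast; linarith)
  constructor
  · have : y - (round y : ℝ) ≠ 0 := sub_ne_zero.mpr hne0
    exact abs_pos.mpr this
  · rcases lt_or_eq_of_le (abs_sub_round y) with h | h
    · exact h
    · exfalso
      rcases abs_eq (by norm_num : (0:ℝ) ≤ 1/2) |>.mp h with h' | h'
      · exact key (2 * round y + 1) (by push_cast; linarith)
      · exact key (2 * round y - 1) (by push_cast; linarith)
end

section
/- For any n ≥ 0, m ≥ 1, 1 ≤ i ≤ b^n, and y ∈ ℝ, the number of b^{−n−m}-grid squares needed to cover S_{n+m} ∩ ([(i−1)/b^n, i/b^n] × [y − η·b^{−n}, y + η·b^{−n}]) is at most (10η + mη + 4)·b^m. -/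
open Set Filter

section Helpers


lemma phi_nonneg (x : ℝ) : 0 ≤ phi x := abs_nonneg _

lemma phi_le_half (x : ℝ) : phi x ≤ 1 / 2 := abs_sub_round x

lemma phi_lipschitz (s t : ℝ) : |phi s - phi t| ≤ |s - t| := by
  have key : ∀ u v : ℝ, phi u - phi v ≤ |u - v| := by
    intro u v
    have h1 : |u - (round v : ℝ)| ≤ |u - v| + |v - (round v : ℝ)| := abs_sub_le _ _ _
    have h2 : |u - (round u : ℝ)| ≤ |u - (round v : ℝ)| := round_le u (round v)
    simp only [phi]
    linarith
  rw [abs_sub_le_iff]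
  exact ⟨key s t, by have := key t s; rwa [abs_sub_comm] at this⟩

lemma phi_eq_left (q : ℤ) (t : ℝ) (h1 : (q:ℝ) ≤ t) (h2 : t ≤ q + 1/2) : phi t = t - q := by
  have hub : phi t ≤ t - q := by
    have := round_le t q
    rwa [abs_of_nonneg (by linarith : (0:ℝ) ≤ t - q)] at this
  have hlb : t - q ≤ phi t := by
    simp only [phi]
    rcases le_or_gt (round t) q with h | h
    · have h' : (round t : ℝ) ≤ q := by exact_mod_cast h
      calc t - (q:ℝ) ≤ t - round t := by linarith
        _ ≤ |t - (round t : ℝ)| := le_abs_self _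
    · have h' : (q:ℝ) + 1 ≤ round t := by exact_mod_cast h
      calc t - (q:ℝ) ≤ (round t : ℝ) - t := by linarith
        _ ≤ |t - (round t:ℝ)| := by rw [abs_sub_comm]; exact le_abs_self _
  exact le_antisymm hub hlb

lemma phi_eq_right (q : ℤ) (t : ℝ) (h1 : (q:ℝ) + 1/2 ≤ t) (h2 : t ≤ q + 1) : phi t = (q:ℝ) + 1 - t := by
  have hub : phi t ≤ (q:ℝ) + 1 - t := by
    have := round_le t (q + 1)
    rw [abs_of_nonpos (by push_cast; linarith : t - ((q + 1 : ℤ) : ℝ) ≤ 0)] at this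
    push_cast at this
    simp only [phi]
    linarith
  have hlb : (q:ℝ) + 1 - t ≤ phi t := by
    simp only [phi]
    rcases le_or_gt (round t) q with h | h
    · have h' : (round t : ℝ) ≤ q := by exact_mod_cast h
      calc (q:ℝ) + 1 - t ≤ t - round t := by linarith
        _ ≤ |t - (round t : ℝ)| := le_abs_self _
    · have h' : (q:ℝ) + 1 ≤ round t := by exact_mod_cast h
      calc (q:ℝ) + 1 - t ≤ (round t : ℝ) - t := by linarith
        _ ≤ |t - (round t:ℝ)| := by rw [abs_sub_comm]; exact le_abs_self _
  exact le_antisymm hub hlb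

lemma phi_affine_cell (r : ℤ) : ∃ α β : ℝ, ∀ t : ℝ, (r:ℝ)/2 ≤ t → t ≤ ((r:ℝ)+1)/2 →
    phi t = α + β * t := by
  rcases Int.even_or_odd r with ⟨q, hq⟩ | ⟨q, hq⟩
  · refine ⟨-(q:ℝ), 1, fun t h1 h2 => ?_⟩
    have e1 : (q:ℝ) ≤ t := by subst hq; push_cast at h1; linarith
    have e2 : t ≤ q + 1/2 := by subst hq; push_cast at h2; linarith
    rw [phi_eq_left q t e1 e2]; ring
  · refine ⟨(q:ℝ)+1, -1, fun t h1 h2 => ?_⟩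
    have e1 : (q:ℝ) + 1/2 ≤ t := by subst hq; push_cast at h1; linarith
    have e2 : t ≤ q + 1 := by subst hq; push_cast at h2; linarith
    rw [phi_eq_right q t e1 e2]; ring

lemma sum_affine_cell (b : ℕ) (hb : 2 ≤ b) (c : ℕ → ℝ) (N : ℕ) (j : ℤ) :
    ∃ A a : ℝ, ∀ x : ℝ, (j:ℝ)/(2*(b:ℝ)^N) ≤ x → x ≤ ((j:ℝ)+1)/(2*(b:ℝ)^N) →
      ∑ k ∈ Finset.range (N+1), c k * phi ((b:ℝ)^k * x) = A + a * x := by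
  have hb0 : (0:ℝ) < b := by positivity
  have hk : ∀ k : ℕ, ∃ α β : ℝ, k ≤ N → ∀ x : ℝ, (j:ℝ)/(2*(b:ℝ)^N) ≤ x →
      x ≤ ((j:ℝ)+1)/(2*(b:ℝ)^N) → phi ((b:ℝ)^k * x) = α + β * ((b:ℝ)^k * x) := by
    intro k
    by_cases hkN : k ≤ N
    · have hMk : (b:ℝ)^N = (b:ℝ)^k * (b:ℝ)^(N-k) := by
        rw [← pow_add]; congr 1; omega
      have hMpos : (0:ℝ) < (b:ℝ)^(N-k) := by positivity
      have hbk : (0:ℝ) < (b:ℝ)^k := by positivity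
      obtain ⟨α, β, hαβ⟩ := phi_affine_cell ⌊(j:ℝ)/(b:ℝ)^(N-k)⌋
      refine ⟨α, β, fun _ x h1 h2 => hαβ _ ?_ ?_⟩
      · -- (r:ℝ)/2 ≤ b^k * x
        have hfl : ((⌊(j:ℝ)/(b:ℝ)^(N-k)⌋ : ℤ):ℝ) ≤ (j:ℝ)/(b:ℝ)^(N-k) := Int.floor_le _
        rw [hMk] at h1
        rw [div_le_iff₀ (by positivity : (0:ℝ) < 2*((b:ℝ)^k*(b:ℝ)^(N-k)))] at h1
        rw [le_div_iff₀ hMpos] at hfl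
        rw [div_le_iff₀ (by norm_num : (0:ℝ) < 2)]
        nlinarith
      · -- b^k * x ≤ (r+1)/2
        have hflup : ((j:ℝ)+1)/(b:ℝ)^(N-k) ≤ ((⌊(j:ℝ)/(b:ℝ)^(N-k)⌋:ℤ):ℝ) + 1 := by
          have h3 : (j:ℝ)/(b:ℝ)^(N-k) < ((⌊(j:ℝ)/(b:ℝ)^(N-k)⌋:ℤ):ℝ) + 1 := Int.lt_floor_add_one _
          rw [div_lt_iff₀ hMpos] at h3
          have hMnat : ((b:ℝ)^(N-k)) = ((b^(N-k) : ℕ) : ℝ) := by push_cast; ring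
          have h5 : (j:ℝ) < (((⌊(j:ℝ)/(b:ℝ)^(N-k)⌋ + 1) * (b^(N-k) : ℕ) : ℤ) : ℝ) := by
            push_cast; rw [hMnat] at h3; push_cast at h3; linarith
          have h6 : j < (⌊(j:ℝ)/(b:ℝ)^(N-k)⌋ + 1) * ((b^(N-k) : ℕ) : ℤ) := by exact_mod_cast h5
          have h7 : j + 1 ≤ (⌊(j:ℝ)/(b:ℝ)^(N-k)⌋ + 1) * ((b^(N-k) : ℕ) : ℤ) := h6
          have h8 : (j:ℝ) + 1 ≤ (((⌊(j:ℝ)/(b:ℝ)^(N-k)⌋:ℤ):ℝ) + 1) * (b:ℝ)^(N-k) := by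
            rw [hMnat]; exact_mod_cast h7
          rw [div_le_iff₀ hMpos]; linarith
        rw [hMk] at h2
        rw [le_div_iff₀ (by positivity : (0:ℝ) < 2*((b:ℝ)^k*(b:ℝ)^(N-k)))] at h2
        rw [div_le_iff₀ hMpos] at hflup
        rw [le_div_iff₀ (by norm_num : (0:ℝ) < 2)]
        nlinarith
    · exact ⟨0, 0, fun h => absurd h hkN⟩
  choose α β hαβ using hk
  refine ⟨∑ k ∈ Finset.range (N+1), c k * α k,
    ∑ k ∈ Finset.range (N+1), c k * (β k * (b:ℝ)^k), fun x h1 h2 => ?_⟩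
  rw [Finset.sum_mul, ← Finset.sum_add_distrib]
  refine Finset.sum_congr rfl fun k hkm => ?_
  have hkN : k ≤ N := by have := Finset.mem_range.mp hkm; omega
  rw [hαβ k hkN x h1 h2]; ring

lemma key_piecewise (b : ℕ) (hb : 2 ≤ b) (c : ℕ → ℝ) (n : ℕ) (x0 L : ℝ)
    (hL : L = ((b:ℝ)^n)⁻¹) :
    ∃ xs, x0 ≤ xs ∧ xs ≤ x0 + L ∧ ∃ A1 a1 A2 a2 : ℝ,
      (∀ x, x0 ≤ x → x ≤ xs → (∑ k ∈ Finset.range n, c k * phi ((b:ℝ)^k * x)) = A1 + a1 * x) ∧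
      (∀ x, xs ≤ x → x ≤ x0 + L → (∑ k ∈ Finset.range n, c k * phi ((b:ℝ)^k * x)) = A2 + a2 * x) := by
  have hb0 : (0:ℝ) < b := by positivity
  have hb2 : (2:ℝ) ≤ (b:ℝ) := by exact_mod_cast hb
  have hL0 : 0 < L := by rw [hL]; positivity
  cases n with
  | zero =>
    exact ⟨x0, le_rfl, by linarith, 0, 0, 0, 0,
      fun x _ _ => by simp, fun x _ _ => by simp⟩
  | succ N =>
    have hD0 : (0:ℝ) < 2*(b:ℝ)^N := by positivity
    have hLD : L ≤ 1/(2*(b:ℝ)^N) := by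
      have h2b : 2*(b:ℝ)^N ≤ (b:ℝ)^(N+1) := by
        rw [pow_succ]; nlinarith [pow_pos hb0 N]
      rw [hL, one_div]
      exact inv_anti₀ hD0 h2b
    set ξ : ℝ := ((⌈x0 * (2*(b:ℝ)^N)⌉ : ℤ) : ℝ)/(2*(b:ℝ)^N) with hξ
    have hx0ξ : x0 ≤ ξ := by
      rw [hξ, le_div_iff₀ hD0]; exact Int.le_ceil _
    have hceil : ((⌈x0 * (2*(b:ℝ)^N)⌉:ℤ):ℝ) - 1 ≤ x0 * (2*(b:ℝ)^N) := by
      have := Int.ceil_lt_add_one (x0 * (2*(b:ℝ)^N)); linarith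
    set xs : ℝ := min ξ (x0 + L) with hxs
    have hxs0 : x0 ≤ xs := le_min hx0ξ (by linarith)
    have hxs1 : xs ≤ x0 + L := min_le_right _ _
    obtain ⟨A1, a1, hA1⟩ := sum_affine_cell b hb c N (⌈x0 * (2*(b:ℝ)^N)⌉ - 1)
    have hP1 : ∀ x, x0 ≤ x → x ≤ xs →
        (∑ k ∈ Finset.range (N+1), c k * phi ((b:ℝ)^k * x)) = A1 + a1 * x := by
      intro x h1 h2
      refine hA1 x ?_ ?_
      · rw [div_le_iff₀ hD0]; push_cast
        nlinarith
      · have hxξ : x ≤ ξ := le_trans h2 (min_le_left _ _)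
        rw [hξ] at hxξ
        push_cast
        calc x ≤ ((⌈x0 * (2*(b:ℝ)^N)⌉ : ℤ) : ℝ)/(2*(b:ℝ)^N) := hxξ
          _ = (((⌈x0 * (2*(b:ℝ)^N)⌉:ℤ):ℝ) - 1 + 1)/(2*(b:ℝ)^N) := by ring_nf
    by_cases hcase : x0 + L ≤ ξ
    · refine ⟨xs, hxs0, hxs1, A1, a1, A1, a1, hP1, ?_⟩
      intro x h1 h2
      have hxseq : xs = x0 + L := min_eq_right hcase
      have hx : x = x0 + L := le_antisymm h2 (hxseq ▸ h1)
      refine hA1 x ?_ ?_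
      · rw [div_le_iff₀ hD0]; push_cast
        nlinarith
      · have hxξ : x ≤ ξ := by rw [hx]; exact hcase
        rw [hξ] at hxξ
        push_cast
        calc x ≤ ((⌈x0 * (2*(b:ℝ)^N)⌉ : ℤ) : ℝ)/(2*(b:ℝ)^N) := hxξ
          _ = (((⌈x0 * (2*(b:ℝ)^N)⌉:ℤ):ℝ) - 1 + 1)/(2*(b:ℝ)^N) := by ring_nf
    · push_neg at hcase
      have hxseq : xs = ξ := min_eq_left (le_of_lt hcase)
      obtain ⟨A2, a2, hA2⟩ := sum_affine_cell b hb c N ⌈x0 * (2*(b:ℝ)^N)⌉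
      refine ⟨xs, hxs0, hxs1, A1, a1, A2, a2, hP1, ?_⟩
      intro x h1 h2
      refine hA2 x ?_ ?_
      · rw [hxseq, hξ] at h1
        exact h1
      · have hup : x0 + L ≤ ξ + 1/(2*(b:ℝ)^N) := by linarith [hLD, hx0ξ]
        rw [hξ] at hup
        calc x ≤ x0 + L := h2
          _ ≤ ((⌈x0 * (2*(b:ℝ)^N)⌉:ℤ):ℝ)/(2*(b:ℝ)^N) + 1/(2*(b:ℝ)^N) := hup
          _ = (((⌈x0 * (2*(b:ℝ)^N)⌉:ℤ):ℝ) + 1)/(2*(b:ℝ)^N) := by ring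



lemma clip_mono (p' q' : ℝ) : ∀ z w : ℝ, z ≤ w →
    max p' (min q' z) ≤ max p' (min q' w) :=
  fun _ _ h => max_le_max le_rfl (min_le_min le_rfl h)

lemma clip_between (p' q' A a u v x : ℝ) (h1 : u ≤ x) (h2 : x ≤ v) :
    min (max p' (min q' (A + a*u))) (max p' (min q' (A + a*v))) ≤ max p' (min q' (A + a*x)) ∧
    max p' (min q' (A + a*x)) ≤ max (max p' (min q' (A + a*u))) (max p' (min q' (A + a*v))) := by
  rcases le_total 0 a with ha | ha
  · have e1 : A + a*u ≤ A + a*x := by nlinarith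
    have e2 : A + a*x ≤ A + a*v := by nlinarith
    exact ⟨min_le_of_left_le (clip_mono p' q' _ _ e1),
      le_max_of_le_right (clip_mono p' q' _ _ e2)⟩
  · have e1 : A + a*v ≤ A + a*x := by nlinarith
    have e2 : A + a*x ≤ A + a*u := by nlinarith
    exact ⟨min_le_of_right_le (clip_mono p' q' _ _ e1),
      le_max_of_le_left (clip_mono p' q' _ _ e2)⟩

lemma sum_abs_clip (p' q' A a : ℝ) (hpq : p' ≤ q') (N : ℕ) (t : ℕ → ℝ)
    (ht : ∀ j, j < N → t j ≤ t (j+1)) :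
    ∑ j ∈ Finset.range N, |max p' (min q' (A + a * t (j+1))) - max p' (min q' (A + a * t j))|
      ≤ q' - p' := by
  set u : ℕ → ℝ := fun j => max p' (min q' (A + a * t j)) with hu
  have hub : ∀ j, u j ≤ q' := fun j => max_le hpq (min_le_left _ _)
  have hlb : ∀ j, p' ≤ u j := fun j => le_max_left _ _
  rcases le_total 0 a with ha | ha
  · have key : ∑ j ∈ Finset.range N, |u (j+1) - u j| = u N - u 0 := by
      rw [← Finset.sum_range_sub u N]
      refine Finset.sum_congr rfl fun j hj => ?_
      have hmono : u j ≤ u (j+1) := by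
        refine clip_mono p' q' _ _ ?_
        have := ht j (Finset.mem_range.mp hj)
        nlinarith
      exact abs_of_nonneg (sub_nonneg.mpr hmono)
    rw [key]
    linarith [hub N, hlb 0]
  · have key : ∑ j ∈ Finset.range N, |u (j+1) - u j| = u 0 - u N := by
      rw [← Finset.sum_range_sub' u N]
      refine Finset.sum_congr rfl fun j hj => ?_
      have hmono : u (j+1) ≤ u j := by
        refine clip_mono p' q' _ _ ?_
        have := ht j (Finset.mem_range.mp hj)
        nlinarith
      rw [abs_of_nonpos (sub_nonpos.mpr hmono)]; ring
    rw [key]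
    linarith [hub 0, hlb N]

lemma max3_min3 (a b c : ℝ) :
    max (max a b) c - min (min a b) c ≤ |c - a| + |b - c| := by
  have h1 := le_abs_self (c - a)
  have h2 := neg_abs_le (c - a)
  have h3 := le_abs_self (b - c)
  have h4 := neg_abs_le (b - c)
  have hD : (0:ℝ) ≤ |c - a| + |b - c| := by positivity
  rw [sub_le_iff_le_add]
  refine max_le (max_le ?_ ?_) ?_
  · have : a - (|c - a| + |b - c|) ≤ min (min a b) c :=
      le_min (le_min (by linarith) (by linarith)) (by linarith)
    linarith
  · have : b - (|c - a| + |b - c|) ≤ min (min a b) c :=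
      le_min (le_min (by linarith) (by linarith)) (by linarith)
    linarith
  · have : c - (|c - a| + |b - c|) ≤ min (min a b) c :=
      le_min (le_min (by linarith) (by linarith)) (by linarith)
    linarith

lemma geom_aux (r : ℝ) (h0 : 0 ≤ r) (h12 : r ≤ 1/2) :
    ∀ mm : ℕ, (∑ k ∈ Finset.range mm, r^k)/2 + r^mm ≤ 1 := by
  intro mm
  induction mm with
  | zero => simp
  | succ t ih =>
    rw [Finset.sum_range_succ, pow_succ]
    have : r^t * r ≤ r^t * (1/2) := mul_le_mul_of_nonneg_left h12 (pow_nonneg h0 t)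
    linarith

end Helpers

set_option maxHeartbeats 2000000 in
theorem strip_grid_cover_bound (b : ℕ) (hb : 2 ≤ b) (c : ℕ → ℝ) (η : ℝ) (hη : 1 ≤ η)
    (hc : ∀ k : ℕ, |c k| ≤ η * ((b : ℝ) ^ k)⁻¹) (n m : ℕ) (hm : 1 ≤ m) (i : ℕ)
    (hi1 : 1 ≤ i) (hi2 : i ≤ b ^ n) (y : ℝ) :
    (gridCoverNum (((b : ℝ) ^ (n + m))⁻¹)
        ({p : ℝ × ℝ | p.1 ∈ Icc (0 : ℝ) 1 ∧
            |(∑ k ∈ Finset.range (n + m), c k * phi ((b : ℝ) ^ k * p.1)) - p.2| ≤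
              η * ((b : ℝ) ^ (n + m))⁻¹} ∩
          (Icc (((i : ℝ) - 1) / (b : ℝ) ^ n) ((i : ℝ) / (b : ℝ) ^ n) ×ˢ
            Icc (y - η * ((b : ℝ) ^ n)⁻¹) (y + η * ((b : ℝ) ^ n)⁻¹))) : ℝ) ≤
      (10 * η + m * η + 4) * (b : ℝ) ^ m := by
  classical
  have hbn : 0 < b := by omega
  have hb0 : (0:ℝ) < (b:ℝ) := by exact_mod_cast hbn
  have hb2 : (2:ℝ) ≤ (b:ℝ) := by exact_mod_cast hb
  have hη0 : (0:ℝ) < η := lt_of_lt_of_le one_pos hη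
  set δ : ℝ := (((b:ℝ))^(n+m))⁻¹ with hδdef
  have hδ : 0 < δ := by rw [hδdef]; exact inv_pos.mpr (pow_pos hb0 _)
  set L : ℝ := ((b:ℝ)^n)⁻¹ with hLdef
  have hL : 0 < L := by rw [hLdef]; exact inv_pos.mpr (pow_pos hb0 _)
  set x0 : ℝ := ((i:ℝ) - 1)/(b:ℝ)^n with hx0def
  have hx0L : (i:ℝ)/(b:ℝ)^n = x0 + L := by
    rw [hx0def, hLdef]; field_simp; ring
  set N : ℕ := b^m with hNdef
  have hN1 : 1 ≤ N := Nat.one_le_pow _ _ hbn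
  have hNcast : ((N:ℕ):ℝ) = (b:ℝ)^m := by rw [hNdef]; push_cast; ring
  have hLδ : L = (N:ℝ) * δ := by
    rw [hLdef, hδdef, hNcast, pow_add, mul_inv]
    field_simp
  set Hn : ℝ → ℝ := fun x => ∑ k ∈ Finset.range n, c k * phi ((b:ℝ)^k * x) with hHndef
  set Rf : ℝ → ℝ := fun x => ∑ k ∈ Finset.Ico n (n+m), c k * phi ((b:ℝ)^k * x) with hRfdef
  have hsplit : ∀ x : ℝ, (∑ k ∈ Finset.range (n+m), c k * phi ((b:ℝ)^k * x)) = Hn x + Rf x :=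
    fun x => (Finset.sum_range_add_sum_Ico _ (Nat.le_add_right n m)).symm
  set eR : ℝ := η * L * (∑ k ∈ Finset.range m, ((b:ℝ)⁻¹)^k) / 2 with heRdef
  have hsum_eR : ∑ k ∈ Finset.Ico n (n+m), η * (((b:ℝ))^k)⁻¹ * (1/2) = eR := by
    rw [Finset.sum_Ico_eq_sum_range]
    simp only [Nat.add_sub_cancel_left]
    have hterm : ∀ k : ℕ, η * ((b:ℝ)^(n+k))⁻¹ * (1/2) = (η * L * (1/2)) * ((b:ℝ)⁻¹)^k := by
      intro k
      rw [hLdef, pow_add, mul_inv, inv_pow]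
      ring
    rw [Finset.sum_congr rfl (fun k _ => hterm k), ← Finset.mul_sum, heRdef]
    ring
  have hRabs : ∀ x : ℝ, |Rf x| ≤ eR := by
    intro x
    have h1 : |Rf x| ≤ ∑ k ∈ Finset.Ico n (n+m), |c k * phi ((b:ℝ)^k * x)| := by
      rw [hRfdef]; exact Finset.abs_sum_le_sum_abs _ _
    have h2 : ∀ k ∈ Finset.Ico n (n+m), |c k * phi ((b:ℝ)^k * x)| ≤ η * ((b:ℝ)^k)⁻¹ * (1/2) := by
      intro k _
      rw [abs_mul, abs_of_nonneg (phi_nonneg _)]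
      have hck := hc k
      have hp1 := phi_le_half ((b:ℝ)^k * x)
      have hp0 := phi_nonneg ((b:ℝ)^k * x)
      have hbki : (0:ℝ) ≤ ((b:ℝ)^k)⁻¹ := le_of_lt (inv_pos.mpr (pow_pos hb0 k))
      calc |c k| * phi ((b:ℝ)^k * x) ≤ (η * ((b:ℝ)^k)⁻¹) * (1/2) := by
            apply mul_le_mul hck hp1 hp0
            positivity
        _ = η * ((b:ℝ)^k)⁻¹ * (1/2) := by ring
    exact le_trans h1 (le_of_le_of_eq (Finset.sum_le_sum h2) hsum_eR)
  have heR : eR + η*δ ≤ η*L := by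
    have hgeo := geom_aux ((b:ℝ)⁻¹) (le_of_lt (inv_pos.mpr hb0))
      (by rw [show (1:ℝ)/2 = (2:ℝ)⁻¹ by norm_num]; exact inv_anti₀ (by norm_num) hb2) m
    have hδL : δ = L * ((b:ℝ)⁻¹)^m := by
      rw [hδdef, hLdef, pow_add, mul_inv, inv_pow]
    have := mul_le_mul_of_nonneg_left hgeo (le_of_lt (mul_pos hη0 hL))
    rw [heRdef, hδL]
    nlinarith
  have hRlip : ∀ u v : ℝ, |u - v| ≤ δ → |Rf u - Rf v| ≤ (m:ℝ)*η*δ := by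
    intro u v huv
    have h1 : Rf u - Rf v = ∑ k ∈ Finset.Ico n (n+m),
        (c k * phi ((b:ℝ)^k * u) - c k * phi ((b:ℝ)^k * v)) := by
      rw [hRfdef, Finset.sum_sub_distrib]
    have h2 : |Rf u - Rf v| ≤ ∑ k ∈ Finset.Ico n (n+m),
        |c k * phi ((b:ℝ)^k * u) - c k * phi ((b:ℝ)^k * v)| := by
      rw [h1]; exact Finset.abs_sum_le_sum_abs _ _
    have h3 : ∀ k ∈ Finset.Ico n (n+m),
        |c k * phi ((b:ℝ)^k * u) - c k * phi ((b:ℝ)^k * v)| ≤ η * δ := by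
      intro k _
      rw [← mul_sub, abs_mul]
      have hphi : |phi ((b:ℝ)^k * u) - phi ((b:ℝ)^k * v)| ≤ (b:ℝ)^k * |u - v| := by
        have := phi_lipschitz ((b:ℝ)^k * u) ((b:ℝ)^k * v)
        rwa [← mul_sub, abs_mul, abs_of_pos (pow_pos hb0 k)] at this
      have hbk : (0:ℝ) < (b:ℝ)^k := pow_pos hb0 k
      calc |c k| * |phi ((b:ℝ)^k * u) - phi ((b:ℝ)^k * v)|
          ≤ (η * ((b:ℝ)^k)⁻¹) * ((b:ℝ)^k * |u - v|) := by
            apply mul_le_mul (hc k) hphi (abs_nonneg _)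
            positivity
        _ = η * |u - v| := by field_simp
        _ ≤ η * δ := by nlinarith
    calc |Rf u - Rf v| ≤ ∑ k ∈ Finset.Ico n (n+m), η*δ := le_trans h2 (Finset.sum_le_sum h3)
      _ = (m:ℝ)*η*δ := by
          rw [Finset.sum_const, Nat.card_Ico, Nat.add_sub_cancel_left, nsmul_eq_mul]
          ring
  -- band and clip window
  set p : ℝ := y - η*L with hpdef
  set q : ℝ := y + η*L with hqdef
  set p' : ℝ := p - η*L with hp'def
  set q' : ℝ := q + η*L with hq'def
  have hp'q' : p' ≤ q' := by
    rw [hp'def, hq'def, hpdef, hqdef]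
    nlinarith
  have hq'p'4 : q' - p' = 4*(η*L) := by
    rw [hp'def, hq'def, hpdef, hqdef]; ring
  set g : ℝ → ℝ := fun x => max p' (min q' (Hn x)) with hgdef
  -- piecewise affine structure
  obtain ⟨xs, hxs0, hxs1, A1, a1, A2, a2, hP1x, hP2x⟩ := key_piecewise b hb c n x0 L hLdef
  have hP1 : ∀ x, x0 ≤ x → x ≤ xs → Hn x = A1 + a1 * x := by
    intro x h1 h2
    simp only [hHndef]
    exact hP1x x h1 h2
  have hP2 : ∀ x, xs ≤ x → x ≤ x0 + L → Hn x = A2 + a2 * x := by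
    intro x h1 h2
    simp only [hHndef]
    exact hP2x x h1 h2
  -- columns
  set xj : ℕ → ℝ := fun j => x0 + j*δ with hxjdef
  have hxjmono : ∀ {j j' : ℕ}, j ≤ j' → xj j ≤ xj j' := by
    intro j j' h
    simp only [hxjdef]
    have h' : (j:ℝ) ≤ (j':ℝ) := by exact_mod_cast h
    nlinarith
  have hxj0 : ∀ j : ℕ, x0 ≤ xj j := by
    intro j
    simp only [hxjdef]
    have h' : 0 ≤ (j:ℝ)*δ := by positivity
    linarith
  have hxjN : xj N = x0 + L := by
    simp only [hxjdef]
    rw [hLδ]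
  have hxjle : ∀ j : ℕ, j ≤ N → xj j ≤ x0 + L := by
    intro j hj
    rw [← hxjN]; exact hxjmono hj
  have hcol : ∀ z, x0 ≤ z → z ≤ x0 + L → ∃ j : ℕ, j < N ∧ xj j ≤ z ∧ z ≤ xj (j+1) := by
    intro z hz1 hz2
    have hu0 : 0 ≤ (z - x0)/δ := div_nonneg (by linarith) hδ.le
    have hfl0 : (0:ℤ) ≤ ⌊(z - x0)/δ⌋ := Int.floor_nonneg.mpr hu0
    rcases le_or_gt ((⌊(z - x0)/δ⌋).toNat) (N - 1) with hc2 | hc2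
    · refine ⟨(⌊(z - x0)/δ⌋).toNat, by omega, ?_, ?_⟩
      · have h1 : (((⌊(z - x0)/δ⌋).toNat : ℕ) : ℝ) = ((⌊(z - x0)/δ⌋ : ℤ) : ℝ) := by
          exact_mod_cast congrArg (fun t : ℤ => (t : ℝ)) (Int.toNat_of_nonneg hfl0)
        simp only [hxjdef]
        rw [h1]
        have h2 : ((⌊(z - x0)/δ⌋ : ℤ) : ℝ) ≤ (z - x0)/δ := Int.floor_le _
        rw [le_div_iff₀ hδ] at h2
        linarith
      · have h1 : (((⌊(z - x0)/δ⌋).toNat : ℕ) : ℝ) = ((⌊(z - x0)/δ⌋ : ℤ) : ℝ) := by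
          exact_mod_cast congrArg (fun t : ℤ => (t : ℝ)) (Int.toNat_of_nonneg hfl0)
        simp only [hxjdef]
        push_cast
        rw [h1]
        have h2 : (z - x0)/δ < ((⌊(z - x0)/δ⌋ : ℤ) : ℝ) + 1 := Int.lt_floor_add_one _
        rw [div_lt_iff₀ hδ] at h2
        linarith
    · refine ⟨N - 1, by omega, ?_, ?_⟩
      · have h1 : ((N - 1 : ℕ) : ℝ) ≤ ((⌊(z - x0)/δ⌋ : ℤ) : ℝ) := by
          have h0 : ((N-1 : ℕ) : ℤ) ≤ ⌊(z - x0)/δ⌋ := by omega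
          exact_mod_cast h0
        have h2 : ((⌊(z - x0)/δ⌋ : ℤ) : ℝ) ≤ (z - x0)/δ := Int.floor_le _
        simp only [hxjdef]
        have h3 : ((N-1:ℕ):ℝ) ≤ (z - x0)/δ := le_trans h1 h2
        rw [le_div_iff₀ hδ] at h3
        linarith
      · have hNm : N - 1 + 1 = N := by omega
        rw [hNm, hxjN]
        exact hz2
  obtain ⟨js, hjsN, hjsl, hjsr⟩ := hcol xs hxs0 hxs1
  -- sup/inf of Rf on columns
  set MR : ℕ → ℝ := fun j => sSup (Rf '' Icc (xj j) (xj (j+1))) with hMRdef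
  set mR : ℕ → ℝ := fun j => sInf (Rf '' Icc (xj j) (xj (j+1))) with hmRdef
  have himgne : ∀ j : ℕ, (Rf '' Icc (xj j) (xj (j+1))).Nonempty := by
    intro j
    exact ⟨Rf (xj j), ⟨xj j, ⟨le_rfl, hxjmono (Nat.le_succ j)⟩, rfl⟩⟩
  have hbddA : ∀ j : ℕ, BddAbove (Rf '' Icc (xj j) (xj (j+1))) := by
    intro j
    refine ⟨eR, ?_⟩
    rintro z ⟨x, _, rfl⟩
    exact (abs_le.mp (hRabs x)).2
  have hbddB : ∀ j : ℕ, BddBelow (Rf '' Icc (xj j) (xj (j+1))) := by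
    intro j
    refine ⟨-eR, ?_⟩
    rintro z ⟨x, _, rfl⟩
    exact (abs_le.mp (hRabs x)).1
  have hMRle : ∀ j : ℕ, ∀ x ∈ Icc (xj j) (xj (j+1)), Rf x ≤ MR j := by
    intro j x hx
    exact le_csSup (hbddA j) ⟨x, hx, rfl⟩
  have hmRle : ∀ j : ℕ, ∀ x ∈ Icc (xj j) (xj (j+1)), mR j ≤ Rf x := by
    intro j x hx
    exact csInf_le (hbddB j) ⟨x, hx, rfl⟩
  have hMReR : ∀ j : ℕ, MR j ≤ eR := by
    intro j
    refine csSup_le (himgne j) ?_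
    rintro z ⟨x, _, rfl⟩
    exact (abs_le.mp (hRabs x)).2
  have hmReR : ∀ j : ℕ, -eR ≤ mR j := by
    intro j
    refine le_csInf (himgne j) ?_
    rintro z ⟨x, _, rfl⟩
    exact (abs_le.mp (hRabs x)).1
  have hmMR : ∀ j : ℕ, mR j ≤ MR j := by
    intro j
    exact le_trans (hmRle j (xj j) ⟨le_rfl, hxjmono (Nat.le_succ j)⟩)
      (hMRle j (xj j) ⟨le_rfl, hxjmono (Nat.le_succ j)⟩)
  have hMmR : ∀ j : ℕ, MR j - mR j ≤ (m:ℝ)*η*δ := by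
    intro j
    have hdiam : ∀ x ∈ Icc (xj j) (xj (j+1)), ∀ x' ∈ Icc (xj j) (xj (j+1)),
        Rf x - Rf x' ≤ (m:ℝ)*η*δ := by
      intro x hx x' hx'
      have h1 : |x - x'| ≤ δ := by
        rw [abs_le]
        rw [mem_Icc] at hx hx'
        have : xj (j+1) - xj j = δ := by simp only [hxjdef]; push_cast; ring
        constructor <;> linarith
      have := hRlip x x' h1
      have := (abs_le.mp this).2
      linarith
    have h1 : MR j ≤ mR j + (m:ℝ)*η*δ := by
      refine csSup_le (himgne j) ?_
      rintro z ⟨x, hx, rfl⟩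
      have h2 : Rf x - (m:ℝ)*η*δ ≤ mR j := by
        refine le_csInf (himgne j) ?_
        rintro z' ⟨x', hx', rfl⟩
        linarith [hdiam x hx x' hx']
      linarith
    linarith
  -- row intervals
  set Wf : ℕ → ℝ := fun j => if j = js then max (max (g (xj j)) (g (xj (j+1)))) (g xs)
    else max (g (xj j)) (g (xj (j+1))) with hWfdef
  set wf : ℕ → ℝ := fun j => if j = js then min (min (g (xj j)) (g (xj (j+1)))) (g xs)
    else min (g (xj j)) (g (xj (j+1))) with hwfdef
  have hwW : ∀ j : ℕ, wf j ≤ Wf j := by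
    intro j
    rw [hWfdef, hwfdef]
    simp only
    split_ifs
    · exact le_trans (min_le_of_left_le (min_le_left _ _))
        (le_max_of_le_left (le_max_left _ _))
    · exact le_trans (min_le_left _ _) (le_max_left _ _)
  set lo : ℕ → ℝ := fun j => wf j + mR j - η*δ with hlodef
  set hi : ℕ → ℝ := fun j => Wf j + MR j + η*δ with hhidef
  set rowIcc : ℕ → Finset ℤ := fun j => Finset.Icc ⌊lo j / δ⌋ ⌊hi j / δ⌋ with hrowdef
  set T : Finset (ℤ × ℤ) :=
    (Finset.range N).biUnion (fun j => ({((j:ℕ):ℤ)} : Finset ℤ) ×ˢ rowIcc j) with hTdef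
  -- hull property
  have hhull : ∀ j : ℕ, j < N → ∀ x, xj j ≤ x → x ≤ xj (j+1) → wf j ≤ g x ∧ g x ≤ Wf j := by
    intro j hjN x hx1 hx2
    rcases lt_trichotomy j js with hlt | heq | hgt
    · -- left piece
      have hj1 : xj (j+1) ≤ xs := le_trans (hxjmono (by omega : j+1 ≤ js)) hjsl
      have hxxs : x ≤ xs := le_trans hx2 hj1
      have e0 : g x = max p' (min q' (A1 + a1 * x)) := by
        simp only [hgdef]
        rw [hP1 x (le_trans (hxj0 j) hx1) hxxs]
      have e1 : g (xj j) = max p' (min q' (A1 + a1 * xj j)) := by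
        simp only [hgdef]
        rw [hP1 (xj j) (hxj0 j) (le_trans hx1 hxxs)]
      have e2 : g (xj (j+1)) = max p' (min q' (A1 + a1 * xj (j+1))) := by
        simp only [hgdef]
        rw [hP1 (xj (j+1)) (hxj0 (j+1)) hj1]
      have hcb := clip_between p' q' A1 a1 (xj j) (xj (j+1)) x hx1 hx2
      rw [hWfdef, hwfdef]
      simp only [if_neg (Nat.ne_of_lt hlt)]
      rw [e0, e1, e2]
      exact hcb
    · -- straddling column
      subst heq
      rw [hWfdef, hwfdef]
      simp only [if_pos rfl]
      rcases le_total x xs with hxle | hxge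
      · have e0 : g x = max p' (min q' (A1 + a1 * x)) := by
          simp only [hgdef]
          rw [hP1 x (le_trans (hxj0 j) hx1) hxle]
        have e1 : g (xj j) = max p' (min q' (A1 + a1 * xj j)) := by
          simp only [hgdef]
          rw [hP1 (xj j) (hxj0 j) hjsl]
        have e3 : g xs = max p' (min q' (A1 + a1 * xs)) := by
          simp only [hgdef]
          rw [hP1 xs hxs0 le_rfl]
        have hcb := clip_between p' q' A1 a1 (xj j) xs x hx1 hxle
        rw [e0, e1, e3] at *
        constructor
        · refine le_trans ?_ hcb.1
          refine le_min (min_le_of_left_le (min_le_left _ _)) (min_le_right _ _)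
        · refine le_trans hcb.2 ?_
          exact max_le (le_max_of_le_left (le_max_left _ _)) (le_max_right _ _)
      · have hj1N : xj (j+1) ≤ x0 + L := hxjle (j+1) (by omega)
        have e0 : g x = max p' (min q' (A2 + a2 * x)) := by
          simp only [hgdef]
          rw [hP2 x hxge (le_trans hx2 hj1N)]
        have e2 : g (xj (j+1)) = max p' (min q' (A2 + a2 * xj (j+1))) := by
          simp only [hgdef]
          rw [hP2 (xj (j+1)) hjsr hj1N]
        have e3 : g xs = max p' (min q' (A2 + a2 * xs)) := by
          simp only [hgdef]
          rw [hP2 xs le_rfl hxs1]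
        have hcb := clip_between p' q' A2 a2 xs (xj (j+1)) x hxge hx2
        rw [e0, e2, e3] at *
        constructor
        · refine le_trans ?_ hcb.1
          exact le_min (min_le_right _ _) (min_le_of_left_le (min_le_right _ _))
        · refine le_trans hcb.2 ?_
          exact max_le (le_max_right _ _) (le_max_of_le_left (le_max_right _ _))
    · -- right piece
      have hj0 : xs ≤ xj j := le_trans hjsr (hxjmono (by omega : js+1 ≤ j))
      have hj1N : xj (j+1) ≤ x0 + L := hxjle (j+1) (by omega)
      have e0 : g x = max p' (min q' (A2 + a2 * x)) := by
        simp only [hgdef]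
        rw [hP2 x (le_trans hj0 hx1) (le_trans hx2 hj1N)]
      have e1 : g (xj j) = max p' (min q' (A2 + a2 * xj j)) := by
        simp only [hgdef]
        rw [hP2 (xj j) hj0 (le_trans hx1 (le_trans hx2 hj1N))]
      have e2 : g (xj (j+1)) = max p' (min q' (A2 + a2 * xj (j+1))) := by
        simp only [hgdef]
        rw [hP2 (xj (j+1)) (le_trans hj0 (le_trans hx1 hx2)) hj1N]
      have hcb := clip_between p' q' A2 a2 (xj j) (xj (j+1)) x hx1 hx2
      rw [hWfdef, hwfdef]
      simp only [if_neg (Nat.ne_of_gt hgt)]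
      rw [e0, e1, e2]
      exact hcb
  -- total oscillation bound
  have hsumWw : ∑ j ∈ Finset.range N, (Wf j - wf j) ≤ 8*(η*L) := by
    have htL : ∀ j : ℕ, j < N → min (xj j) xs ≤ min (xj (j+1)) xs :=
      fun j _ => min_le_min (hxjmono (Nat.le_succ j)) le_rfl
    have htR : ∀ j : ℕ, j < N → max (xj j) xs ≤ max (xj (j+1)) xs :=
      fun j _ => max_le_max (hxjmono (Nat.le_succ j)) le_rfl
    have hgL : ∀ j : ℕ, g (min (xj j) xs) = max p' (min q' (A1 + a1 * (min (xj j) xs))) := by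
      intro j
      simp only [hgdef]
      rw [hP1 _ (le_min (hxj0 j) hxs0) (min_le_right _ _)]
    have hgR : ∀ j : ℕ, j ≤ N → g (max (xj j) xs) = max p' (min q' (A2 + a2 * (max (xj j) xs))) := by
      intro j hj
      simp only [hgdef]
      rw [hP2 _ (le_max_right _ _) (max_le (hxjle j hj) hxs1)]
    have hFL : ∑ j ∈ Finset.range N, |g (min (xj (j+1)) xs) - g (min (xj j) xs)| ≤ q' - p' := by
      have hs := sum_abs_clip p' q' A1 a1 hp'q' N (fun j => min (xj j) xs) htL
      refine le_trans (le_of_eq (Finset.sum_congr rfl fun j _ => ?_)) hs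
      rw [hgL j, hgL (j+1)]
    have hFR : ∑ j ∈ Finset.range N, |g (max (xj (j+1)) xs) - g (max (xj j) xs)| ≤ q' - p' := by
      have hs := sum_abs_clip p' q' A2 a2 hp'q' N (fun j => max (xj j) xs) htR
      refine le_trans (le_of_eq (Finset.sum_congr rfl fun j hj => ?_)) hs
      have hjN := Finset.mem_range.mp hj
      rw [hgR j (by omega), hgR (j+1) (by omega)]
    have hperj : ∀ j ∈ Finset.range N, Wf j - wf j ≤
        |g (min (xj (j+1)) xs) - g (min (xj j) xs)| +
        |g (max (xj (j+1)) xs) - g (max (xj j) xs)| := by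
      intro j _
      rcases lt_trichotomy j js with hlt | heq | hgt
      · have e1 : min (xj j) xs = xj j := min_eq_left (le_trans (hxjmono hlt.le) hjsl)
        have e2 : min (xj (j+1)) xs = xj (j+1) :=
          min_eq_left (le_trans (hxjmono (by omega : j+1 ≤ js)) hjsl)
        rw [hWfdef, hwfdef]
        simp only [if_neg (Nat.ne_of_lt hlt)]
        rw [e1, e2, max_sub_min_eq_abs]
        have h2 := abs_nonneg (g (max (xj (j+1)) xs) - g (max (xj j) xs))
        linarith
      · subst heq
        have e1 : min (xj j) xs = xj j := min_eq_left hjsl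
        have e2 : min (xj (j+1)) xs = xs := min_eq_right hjsr
        have e3 : max (xj j) xs = xs := max_eq_right hjsl
        have e4 : max (xj (j+1)) xs = xj (j+1) := max_eq_left hjsr
        rw [hWfdef, hwfdef]
        simp only [if_pos rfl]
        rw [e1, e2, e3, e4]
        exact max3_min3 (g (xj j)) (g (xj (j+1))) (g xs)
      · have e1 : min (xj j) xs = xs := min_eq_right (le_trans hjsr (hxjmono (by omega : js+1 ≤ j)))
        have e2 : min (xj (j+1)) xs = xs :=
          min_eq_right (le_trans hjsr (hxjmono (by omega : js+1 ≤ j+1)))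
        have e3 : max (xj j) xs = xj j := max_eq_left (le_trans hjsr (hxjmono (by omega : js+1 ≤ j)))
        have e4 : max (xj (j+1)) xs = xj (j+1) :=
          max_eq_left (le_trans hjsr (hxjmono (by omega : js+1 ≤ j+1)))
        rw [hWfdef, hwfdef]
        simp only [if_neg (Nat.ne_of_gt hgt)]
        rw [e1, e2, e3, e4, max_sub_min_eq_abs]
        have h2 := abs_nonneg (g xs - g xs)
        linarith
    calc ∑ j ∈ Finset.range N, (Wf j - wf j)
        ≤ ∑ j ∈ Finset.range N, (|g (min (xj (j+1)) xs) - g (min (xj j) xs)| +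
            |g (max (xj (j+1)) xs) - g (max (xj j) xs)|) := Finset.sum_le_sum hperj
      _ = (∑ j ∈ Finset.range N, |g (min (xj (j+1)) xs) - g (min (xj j) xs)|) +
            ∑ j ∈ Finset.range N, |g (max (xj (j+1)) xs) - g (max (xj j) xs)| :=
          Finset.sum_add_distrib
      _ ≤ (q' - p') + (q' - p') := add_le_add hFL hFR
      _ = 8*(η*L) := by rw [hq'p'4]; ring
  -- cardinality of each row set
  have hrow : ∀ j : ℕ, ((rowIcc j).card : ℝ) ≤ (Wf j - wf j)/δ + ((m:ℝ)*η + 2*η + 2) := by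
    intro j
    have hηδ : 0 < η*δ := mul_pos hη0 hδ
    have hlohi : lo j ≤ hi j := by
      rw [hlodef, hhidef]
      simp only
      have h1 := hwW j
      have h2 := hmMR j
      linarith
    have hfl : ⌊lo j / δ⌋ ≤ ⌊hi j / δ⌋ :=
      Int.floor_le_floor ((div_le_div_iff_of_pos_right hδ).mpr hlohi)
    have hcard : ((rowIcc j).card : ℝ) = ((⌊hi j/δ⌋ : ℤ) : ℝ) - ((⌊lo j/δ⌋ : ℤ):ℝ) + 1 := by
      rw [hrowdef]
      simp only
      rw [Int.card_Icc]
      have h0 : (0:ℤ) ≤ ⌊hi j/δ⌋ + 1 - ⌊lo j/δ⌋ := by omega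
      have hcast : (((⌊hi j/δ⌋ + 1 - ⌊lo j/δ⌋).toNat : ℕ) : ℝ)
          = ((⌊hi j/δ⌋ + 1 - ⌊lo j/δ⌋ : ℤ) : ℝ) := by
        exact_mod_cast congrArg (fun t : ℤ => (t:ℝ)) (Int.toNat_of_nonneg h0)
      rw [hcast]
      push_cast
      ring
    rw [hcard]
    have h1 : ((⌊hi j/δ⌋ : ℤ):ℝ) ≤ hi j/δ := Int.floor_le _
    have h2 : lo j/δ - 1 < ((⌊lo j/δ⌋:ℤ):ℝ) := Int.sub_one_lt_floor _
    have h3 : hi j/δ - lo j/δ ≤ (Wf j - wf j)/δ + (m:ℝ)*η + 2*η := by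
      have e1 : hi j - lo j ≤ (Wf j - wf j) + ((m:ℝ)*η + 2*η)*δ := by
        rw [hlodef, hhidef]
        simp only
        have := hMmR j
        nlinarith
      have e2 : (hi j - lo j)/δ ≤ ((Wf j - wf j) + ((m:ℝ)*η + 2*η)*δ)/δ :=
        (div_le_div_iff_of_pos_right hδ).mpr e1
      rw [← sub_div]
      calc (hi j - lo j)/δ ≤ ((Wf j - wf j) + ((m:ℝ)*η + 2*η)*δ)/δ := e2
        _ = (Wf j - wf j)/δ + ((m:ℝ)*η + 2*η) := by
            rw [add_div, mul_div_cancel_right₀ _ (ne_of_gt hδ)]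
      linarith
    linarith
  -- total cardinality bound
  have hN0 : (1:ℝ) ≤ (N:ℝ) := by exact_mod_cast hN1
  have hTcard : (T.card : ℝ) ≤ (10*η + (m:ℝ)*η + 4) * (b:ℝ)^m := by
    have h1 : T.card ≤ ∑ j ∈ Finset.range N, (({((j:ℕ):ℤ)} : Finset ℤ) ×ˢ rowIcc j).card := by
      rw [hTdef]; exact Finset.card_biUnion_le
    have h2 : ∀ j ∈ Finset.range N, (({((j:ℕ):ℤ)} : Finset ℤ) ×ˢ rowIcc j).card
        = (rowIcc j).card := by
      intro j _
      rw [Finset.card_product, Finset.card_singleton, one_mul]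
    have h3 : (T.card : ℝ) ≤ ∑ j ∈ Finset.range N, ((rowIcc j).card : ℝ) := by
      have h := le_trans h1 (le_of_eq (Finset.sum_congr rfl h2))
      push_cast
      exact_mod_cast h
    have h4 : ∑ j ∈ Finset.range N, ((rowIcc j).card : ℝ)
        ≤ ∑ j ∈ Finset.range N, ((Wf j - wf j)/δ + ((m:ℝ)*η + 2*η + 2)) :=
      Finset.sum_le_sum (fun j _ => hrow j)
    have h5 : ∑ j ∈ Finset.range N, ((Wf j - wf j)/δ + ((m:ℝ)*η + 2*η + 2))
        = (∑ j ∈ Finset.range N, (Wf j - wf j))/δ + (N:ℝ)*((m:ℝ)*η + 2*η + 2) := by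
      rw [Finset.sum_add_distrib, Finset.sum_div, Finset.sum_const, Finset.card_range,
        nsmul_eq_mul]
    have h6 : (∑ j ∈ Finset.range N, (Wf j - wf j))/δ ≤ 8*η*(N:ℝ) := by
      rw [div_le_iff₀ hδ]
      have e : 8*(η*L) = 8*η*((N:ℝ)*δ) := by rw [← hLδ]; ring
      nlinarith [hsumWw]
    have h7 : (T.card : ℝ) ≤ (N:ℝ)*(10*η + (m:ℝ)*η + 2) := by
      calc (T.card : ℝ) ≤ _ := h3
        _ ≤ _ := h4
        _ = _ := h5
        _ ≤ 8*η*(N:ℝ) + (N:ℝ)*((m:ℝ)*η + 2*η + 2) := by linarith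
        _ = (N:ℝ)*(10*η + (m:ℝ)*η + 2) := by ring
    rw [← hNcast]
    have hm0 : (0:ℝ) ≤ (m:ℝ) := Nat.cast_nonneg m
    nlinarith
  -- conclusion: exhibit the cover
  refine le_trans (Nat.cast_le.mpr (Nat.sInf_le ?_)) hTcard
  simp only [Set.mem_setOf_eq]
  refine ⟨(x0, 0), T, rfl, ?_⟩
  rintro ⟨x, y'⟩ ⟨hE, hrect⟩
  simp only [Set.mem_setOf_eq] at hE
  obtain ⟨hx01, hHy⟩ := hE
  rw [Set.mem_prod] at hrect
  obtain ⟨hxmem, hymem⟩ := hrect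
  rw [Set.mem_Icc] at hxmem hymem
  have hxr : x ≤ x0 + L := by
    rw [← hx0L]
    exact hxmem.2
  obtain ⟨j, hjN, hjl, hjr⟩ := hcol x hxmem.1 hxr
  have hH2 : |Hn x + Rf x - y'| ≤ η*δ := by
    rw [← hsplit x]
    exact hHy
  have habs := abs_le.mp hH2
  have hhullx := hhull j hjN x hjl hjr
  have hRx1 : Rf x ≤ MR j := hMRle j x ⟨hjl, hjr⟩
  have hRx2 : mR j ≤ Rf x := hmRle j x ⟨hjl, hjr⟩
  have hMj : MR j ≤ eR := hMReR j
  have hmj : -eR ≤ mR j := hmReR j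
  have hmMj := hmMR j
  have hup : y' ≤ hi j := by
    rcases le_or_gt (Hn x) q' with hle | hgt
    · have hgx : Hn x ≤ g x := by
        simp only [hgdef]
        rw [min_eq_right hle]
        exact le_max_right _ _
      rw [hhidef]
      simp only
      linarith [hhullx.2]
    · have hgx : g x = q' := by
        simp only [hgdef]
        rw [min_eq_left hgt.le, max_eq_right hp'q']
      rw [hhidef]
      simp only
      have h2 : q' ≤ Wf j := hgx ▸ hhullx.2
      have hy2 : y' ≤ q := hymem.2
      have h1 : q + 2*(η*δ) ≤ q' - eR + η*δ := by
        rw [hq'def]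
        linarith [heR]
      linarith
  have hlo2 : lo j ≤ y' := by
    rcases le_or_gt p' (Hn x) with hle | hgt
    · have hgx : g x ≤ Hn x := by
        simp only [hgdef]
        exact max_le hle (min_le_right _ _)
      rw [hlodef]
      simp only
      linarith [hhullx.1]
    · have hgx : g x = p' := by
        simp only [hgdef]
        rw [min_eq_right (le_trans hgt.le hp'q'), max_eq_left hgt.le]
      rw [hlodef]
      simp only
      have h2 : wf j ≤ p' := by
        have := hhullx.1
        rw [hgx] at this
        exact this
      have hy1 : p ≤ y' := hymem.1
      have h1 : p' + eR - η*δ ≤ p - 2*(η*δ) := by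
        rw [hp'def]
        linarith [heR]
      linarith
  simp only [Set.mem_iUnion]
  refine ⟨(((j:ℕ):ℤ), ⌊y'/δ⌋), ?_, ?_⟩
  · refine Finset.mem_biUnion.mpr ⟨j, Finset.mem_range.mpr hjN, ?_⟩
    rw [Finset.mem_product]
    refine ⟨Finset.mem_singleton_self _, Finset.mem_Icc.mpr ⟨?_, ?_⟩⟩
    · exact Int.floor_le_floor ((div_le_div_iff_of_pos_right hδ).mpr hlo2)
    · exact Int.floor_le_floor ((div_le_div_iff_of_pos_right hδ).mpr hup)
  · simp only [gridSquare, Set.mem_prod, Set.mem_Icc]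
    simp only [hxjdef] at hjl hjr
    push_cast at hjl hjr ⊢
    refine ⟨⟨by linarith, by linarith⟩, ?_, ?_⟩
    · have := Int.floor_le (y'/δ)
      rw [le_div_iff₀ hδ] at this
      linarith
    · have := Int.lt_floor_add_one (y'/δ)
      rw [div_lt_iff₀ hδ] at this
      linarith
end
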